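/- arXiv:2506.12283 — 2 statements merged into one kernel-verified Lean document; each statement's English description precedes it below -/
import Mathlib

section
/- Perturbed descent under approximate best responses: in a weighted potential game with weights w_i > 0, suppose (a^k)_{k ≥ 0} is generated by cyclic ε-best-response dynamics with sub-optimality errors ε_i^k ≥ 0; i.e., for each outer iteration k there are intermediate feasible profiles b^0 = a^k, b^1, …, b^N = a^{k+1} such that b^i agrees with b^{i−1} except in coordinate i, b^i_i ∈ A_i, and J_i(b^i) ≤ J_i(x, b^{i−1}_{-i}) + ε_i^k for all x ∈ A_i. Then for every k, Φ(a^{k+1}) ≤ Φ(a^k) + Σ_{i=1}^N ε_i^k / w_i. -/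
/-- The game `J` with feasible sets `A` is a weighted potential game with potential `Φ`
and weights `w`. -/
def IsWPG {N : ℕ} {d : Fin N → ℕ}
    (A : ∀ i : Fin N, Set (EuclideanSpace ℝ (Fin (d i))))
    (J : ∀ _ : Fin N, (∀ j : Fin N, EuclideanSpace ℝ (Fin (d j))) → ℝ)
    (Φ : (∀ j : Fin N, EuclideanSpace ℝ (Fin (d j))) → ℝ)
    (w : Fin N → ℝ) : Prop :=
  ∀ a : ∀ j : Fin N, EuclideanSpace ℝ (Fin (d j)), (∀ j, a j ∈ A j) →
    ∀ i : Fin N, ∀ a' ∈ A i,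
      J i (Function.update a i a') - J i a = w i * (Φ (Function.update a i a') - Φ a)

/-- The sequence of feasible profiles `a` is generated by cyclic ε-best-response
dynamics with sub-optimality errors `ε k i`: in each outer iteration `k` there are
intermediate feasible profiles `b 0 = a k, b 1, …, b N = a (k+1)` where step `i`
changes only coordinate `i`, to a feasible `ε k i`-best response of player `i`. -/
def IsCyclicEpsBR {N : ℕ} {d : Fin N → ℕ}
    (A : ∀ i : Fin N, Set (EuclideanSpace ℝ (Fin (d i))))
    (J : ∀ _ : Fin N, (∀ j : Fin N, EuclideanSpace ℝ (Fin (d j))) → ℝ)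
    (ε : ℕ → Fin N → ℝ)
    (a : ℕ → ∀ j : Fin N, EuclideanSpace ℝ (Fin (d j))) : Prop :=
  (∀ k j, a k j ∈ A j) ∧
  ∀ k : ℕ, ∃ b : ℕ → ∀ j : Fin N, EuclideanSpace ℝ (Fin (d j)),
    b 0 = a k ∧ b N = a (k + 1) ∧
    (∀ m, m ≤ N → ∀ j, b m j ∈ A j) ∧
    ∀ i : Fin N,
      (∀ j : Fin N, j ≠ i → b ((i : ℕ) + 1) j = b (i : ℕ) j) ∧
      ∀ x ∈ A i, J i (b ((i : ℕ) + 1)) ≤ J i (Function.update (b (i : ℕ)) i x) + ε k i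

/-- Perturbed descent under approximate best responses: along cyclic
ε-best-response dynamics, `Φ (a (k+1)) ≤ Φ (a k) + ∑ i, ε k i / w i` for every `k`. -/
theorem stmt_9
    (N : ℕ) (hN : 1 ≤ N) (d : Fin N → ℕ)
    (A : ∀ i : Fin N, Set (EuclideanSpace ℝ (Fin (d i))))
    (hA : ∀ i, (A i).Nonempty)
    (J : ∀ _ : Fin N, (∀ j : Fin N, EuclideanSpace ℝ (Fin (d j))) → ℝ)
    (Φ : (∀ j : Fin N, EuclideanSpace ℝ (Fin (d j))) → ℝ)
    (w : Fin N → ℝ) (hw : ∀ i, 0 < w i)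
    (hWPG : IsWPG A J Φ w)
    (ε : ℕ → Fin N → ℝ) (hε : ∀ k i, 0 ≤ ε k i)
    (a : ℕ → ∀ j : Fin N, EuclideanSpace ℝ (Fin (d j)))
    (hBR : IsCyclicEpsBR A J ε a) :
    ∀ k : ℕ, Φ (a (k + 1)) ≤ Φ (a k) + ∑ i : Fin N, ε k i / w i := by

  intro k
  obtain ⟨hfeas, hdyn⟩ := hBR
  obtain ⟨b, hb0, hbN, hbf, hstep⟩ := hdyn k
  -- step inequality for each player
  have key : ∀ i : Fin N, Φ (b ((i : ℕ) + 1)) - Φ (b (i : ℕ)) ≤ ε k i / w i := by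
    intro i
    obtain ⟨hupd, hbr⟩ := hstep i
    have hi1 : (i : ℕ) + 1 ≤ N := i.isLt
    have hiN : (i : ℕ) ≤ N := le_of_lt i.isLt
    have hmem : b ((i : ℕ) + 1) i ∈ A i := hbf _ hi1 i
    have heq : b ((i : ℕ) + 1) = Function.update (b (i : ℕ)) i (b ((i : ℕ) + 1) i) := by
      funext j
      by_cases hj : j = i
      · subst hj; simp
      · rw [Function.update_of_ne hj]
        exact hupd j hj
    have hJ : J i (b ((i : ℕ) + 1)) - J i (b (i : ℕ)) =
        w i * (Φ (b ((i : ℕ) + 1)) - Φ (b (i : ℕ))) := by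
      rw [heq]
      exact hWPG (b (i : ℕ)) (hbf _ hiN) i _ hmem
    have hx : J i (b ((i : ℕ) + 1)) ≤ J i (b (i : ℕ)) + ε k i := by
      have := hbr (b (i : ℕ) i) (hbf _ hiN i)
      rwa [Function.update_eq_self] at this
    have hmul : w i * (Φ (b ((i : ℕ) + 1)) - Φ (b (i : ℕ))) ≤ ε k i := by
      rw [← hJ]; linarith
    rw [le_div_iff₀ (hw i), mul_comm]
    exact hmul
  have tele : Φ (b N) - Φ (b 0) = ∑ i : Fin N, (Φ (b ((i : ℕ) + 1)) - Φ (b (i : ℕ))) := by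
    rw [Fin.sum_univ_eq_sum_range (fun m => Φ (b (m + 1)) - Φ (b m))]
    exact (Finset.sum_range_sub (fun m => Φ (b m)) N).symm
  have hle : Φ (b N) - Φ (b 0) ≤ ∑ i : Fin N, ε k i / w i := by
    rw [tele]
    exact Finset.sum_le_sum (fun i _ => key i)
  rw [hb0, hbN] at hle
  linarith
end

section
/- Convergence of the potential under summable errors: in a weighted potential game with weights w_i > 0 whose potential Φ is bounded below on ∏_i A_i, let (a^k)_{k ≥ 0} be generated by cyclic ε-best-response dynamics with sub-optimality errors ε_i^k ≥ 0, and set Δ_k = Σ_{i=1}^N ε_i^k / w_i. If Σ_{k=0}^∞ Δ_k < ∞, then the sequence (Φ(a^k))_{k ≥ 0} converges to a finite limit. -/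
/-- Convergence of the potential under summable errors: if the
potential is bounded below on the feasible set and `Δ k = ∑ i, ε k i / w i` is
summable, then `Φ (a k)` converges to a finite limit. -/
theorem stmt_10
    (N : ℕ) (hN : 1 ≤ N) (d : Fin N → ℕ)
    (A : ∀ i : Fin N, Set (EuclideanSpace ℝ (Fin (d i))))
    (hA : ∀ i, (A i).Nonempty)
    (J : ∀ _ : Fin N, (∀ j : Fin N, EuclideanSpace ℝ (Fin (d j))) → ℝ)
    (Φ : (∀ j : Fin N, EuclideanSpace ℝ (Fin (d j))) → ℝ)
    (w : Fin N → ℝ) (hw : ∀ i, 0 < w i)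
    (hWPG : IsWPG A J Φ w)
    (C : ℝ)
    (hbdd : ∀ b : ∀ j : Fin N, EuclideanSpace ℝ (Fin (d j)), (∀ j, b j ∈ A j) → C ≤ Φ b)
    (ε : ℕ → Fin N → ℝ) (hε : ∀ k i, 0 ≤ ε k i)
    (a : ℕ → ∀ j : Fin N, EuclideanSpace ℝ (Fin (d j)))
    (hBR : IsCyclicEpsBR A J ε a)
    (hsum : Summable (fun k : ℕ => ∑ i : Fin N, ε k i / w i)) :
    ∃ L : ℝ, Filter.Tendsto (fun k => Φ (a k)) Filter.atTop (nhds L) := by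
  classical
  obtain ⟨hfeas, hb⟩ := hBR
  set Δ : ℕ → ℝ := fun k => ∑ i : Fin N, ε k i / w i with hΔdef
  have hΔ0 : ∀ k, 0 ≤ Δ k := fun k =>
    Finset.sum_nonneg fun i _ => div_nonneg (hε k i) (hw i).le
  have key : ∀ k, Φ (a (k + 1)) ≤ Φ (a k) + Δ k := by
    intro k
    obtain ⟨b, hb0, hbN, hbfeas, hstep⟩ := hb k
    have step : ∀ i : Fin N, Φ (b ((i : ℕ) + 1)) - Φ (b (i : ℕ)) ≤ ε k i / w i := by
      intro i
      obtain ⟨hagree, hopt⟩ := hstep i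
      have hub : Function.update (b (i : ℕ)) i (b ((i : ℕ) + 1) i) = b ((i : ℕ) + 1) := by
        funext j
        by_cases h : j = i
        · subst h; simp
        · rw [Function.update_of_ne h]; exact (hagree j h).symm
      have hmem : b ((i : ℕ) + 1) i ∈ A i := hbfeas _ (Nat.succ_le_of_lt i.isLt) i
      have h1 := hopt (b (i : ℕ) i) (hbfeas (i : ℕ) (le_of_lt i.isLt) i)
      rw [Function.update_eq_self] at h1
      have h2 := hWPG (b (i : ℕ)) (hbfeas _ (le_of_lt i.isLt)) i (b ((i : ℕ) + 1) i) hmem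
      rw [hub] at h2
      rw [le_div_iff₀ (hw i)]
      nlinarith [h1, h2]
    have tel : Φ (b N) - Φ (b 0) = ∑ m ∈ Finset.range N, (Φ (b (m + 1)) - Φ (b m)) :=
      (Finset.sum_range_sub (fun m => Φ (b m)) N).symm
    have hle : ∑ m ∈ Finset.range N, (Φ (b (m + 1)) - Φ (b m)) ≤ Δ k := by
      rw [hΔdef, ← Fin.sum_univ_eq_sum_range (fun m => Φ (b (m + 1)) - Φ (b m))]
      exact Finset.sum_le_sum fun i _ => step i
    rw [hb0, hbN] at tel
    linarith
  set S : ℕ → ℝ := fun n => ∑ j ∈ Finset.range n, Δ j with hSdef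
  have hStend : Filter.Tendsto S Filter.atTop (nhds (∑' k, Δ k)) :=
    hsum.hasSum.tendsto_sum_nat
  have hSle : ∀ n, S n ≤ ∑' k, Δ k := fun n =>
    Summable.sum_le_tsum (Finset.range n) (fun k _ => hΔ0 k) hsum
  set g : ℕ → ℝ := fun k => Φ (a k) - S k with hgdef
  have hanti : Antitone g := by
    apply antitone_nat_of_succ_le
    intro k
    have : S (k + 1) = S k + Δ k := Finset.sum_range_succ _ _
    have := key k
    simp only [hgdef]
    linarith
  have hbddg : BddBelow (Set.range g) := by
    refine ⟨C - ∑' k, Δ k, ?_⟩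
    rintro x ⟨k, rfl⟩
    have h1 : C ≤ Φ (a k) := hbdd (a k) (hfeas k)
    have h2 := hSle k
    simp only [hgdef]
    linarith
  have hgtend : Filter.Tendsto g Filter.atTop (nhds (⨅ k, g k)) :=
    tendsto_atTop_ciInf hanti hbddg
  refine ⟨(⨅ k, g k) + ∑' k, Δ k, ?_⟩
  have := hgtend.add hStend
  refine this.congr fun k => ?_
  simp only [hgdef]
  ring
end
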